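/- For any word (a_1,…,a_n) and any measurable S ⊆ 𝒜^ℕ, the matrix measure satisfies Q*_ω(σ^{-n}(S) ∩ π_n⁻¹{(a_1,…,a_n)}) = T†_{a_1;θ(ω)} ∘ ⋯ ∘ T†_{a_n;θⁿ(ω)}(Q*_{θⁿ(ω)}(S)) for ℙ-a.e. ω. -/

import Mathlib

/-! As functions of `S`, both sides are countably additive matrix-valued set functions on the
sequence space: the right side because `Tdagq v θ ω n w` is the congruence `L ↦ Vᴴ * L * V` with
`V = Vq v θ ω n w`. On word cylinders they agree a.e.: `σ⁻ⁿ(cyl w') ∩ cyl w` is the cylinder of the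
concatenated word, and `T†` of a concatenation factors through `θⁿ ω`. Since `𝒜` is countable, word
cylinders form a π-system generating the product σ-algebra, so the two vector measures coincide.
Only countably many cylinder identities are needed, and `θⁿ` preserves `μ`, so one null set serves
all of them. -/

open MeasureTheory Matrix Filter
open scoped ComplexOrder ENNReal

/-- Cylinder set of sequences whose first n coordinates equal a given word. -/
def cyl {𝒜 : Type*} (n : ℕ) (w : Fin n → 𝒜) : Set (ℕ → 𝒜) :=
  {x | ∀ i : Fin n, x i = w i}

/-- V_{n;ω}(a_1,…,a_n) = v_{a_n; θⁿ(ω)} ⋯ v_{a_1; θ(ω)}. -/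
noncomputable def Vq {Ω 𝒜 : Type*} {d : ℕ} (v : Ω → 𝒜 → Matrix (Fin d) (Fin d) ℂ)
    (θ : Ω → Ω) (ω : Ω) : (n : ℕ) → (Fin n → 𝒜) → Matrix (Fin d) (Fin d) ℂ
  | 0, _ => 1
  | n + 1, w => v (θ^[n + 1] ω) (w (Fin.last n)) * Vq v θ ω n (fun i => w i.castSucc)

/-- The left shift σ on 𝒜^ℕ. -/
def shiftSeq {𝒜 : Type*} (x : ℕ → 𝒜) : ℕ → 𝒜 := fun k => x (k + 1)

/-- The skew shift τ(ω, ā) = (θ(ω), σ(ā)). -/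
def tau {Ω 𝒜 : Type*} (θ : Ω → Ω) : Ω × (ℕ → 𝒜) → Ω × (ℕ → 𝒜) :=
  fun p => (θ p.1, shiftSeq p.2)

/-- The annealed quantum measure ℚ̄(Γ) = ∫_Ω ℚ_ω(Γ^ω) dℙ(ω). -/
noncomputable def annealed {Ω 𝒜 : Type*} [MeasurableSpace Ω] [MeasurableSpace 𝒜] (μ : Measure Ω)
    (Q : Ω → Measure (ℕ → 𝒜)) (Γ : Set (Ω × (ℕ → 𝒜))) : ℝ≥0∞ :=
  ∫⁻ ω, Q ω {x | (ω, x) ∈ Γ} ∂μ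

/-- T†_{a_1;θ(ω)} ∘ ⋯ ∘ T†_{a_n;θⁿ(ω)} applied to L, where T†_{a;ω}(L) = v_{a;ω}† L v_{a;ω}. -/
noncomputable def Tdagq {Ω 𝒜 : Type*} {d : ℕ} (v : Ω → 𝒜 → Matrix (Fin d) (Fin d) ℂ)
    (θ : Ω → Ω) : Ω → (n : ℕ) → (Fin n → 𝒜) →
      Matrix (Fin d) (Fin d) ℂ → Matrix (Fin d) (Fin d) ℂ
  | _, 0, _, L => L
  | ω, n + 1, w, L =>
      (v (θ ω) (w 0))ᴴ * Tdagq v θ (θ ω) n (fun i => w i.succ) L * v (θ ω) (w 0)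


section Kraus

variable {Ω 𝒜 : Type*} {d : ℕ} (v : Ω → 𝒜 → Matrix (Fin d) (Fin d) ℂ) (θ : Ω → Ω)

theorem Vq_snoc (ω : Ω) (n : ℕ) (w : Fin n → 𝒜) (a : 𝒜) :
    Vq v θ ω (n + 1) (Fin.snoc w a) = v (θ^[n + 1] ω) a * Vq v θ ω n w := by
  simp [Vq]

theorem Vq_succ (n : ℕ) (ω : Ω) (w : Fin (n + 1) → 𝒜) :
    Vq v θ ω (n + 1) w = Vq v θ (θ ω) n (fun i => w i.succ) * v (θ ω) (w 0) := by
  induction n with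
  | zero => simp [Vq]
  | succ n ih =>
    rw [Vq, ih, Vq, Matrix.mul_assoc]
    rfl

theorem Tdagq_eq_conj (ω : Ω) (n : ℕ) (w : Fin n → 𝒜) (L : Matrix (Fin d) (Fin d) ℂ) :
    Tdagq v θ ω n w L = (Vq v θ ω n w)ᴴ * L * Vq v θ ω n w := by
  induction n generalizing ω with
  | zero => simp [Tdagq, Vq]
  | succ n ih => simp only [Tdagq, ih, Vq_succ, conjTranspose_mul, Matrix.mul_assoc]

theorem Vq_append (ω : Ω) (n m : ℕ) (w : Fin n → 𝒜) (w' : Fin m → 𝒜) :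
    Vq v θ ω (n + m) (Fin.append w w') = Vq v θ (θ^[n] ω) m w' * Vq v θ ω n w := by
  induction m with
  | zero => simp [Vq, Fin.append_right_nil]
  | succ m ih =>
    rw [← Fin.snoc_init_self w', Fin.append_snoc]
    refine (Vq_snoc v θ ω (n + m) _ _).trans ?_
    rw [Vq_snoc, ih, Matrix.mul_assoc, ← Function.iterate_add_apply]
    congr 3
    omega

theorem Tdagq_append (ω : Ω) (n m : ℕ) (w : Fin n → 𝒜) (w' : Fin m → 𝒜)
    (L : Matrix (Fin d) (Fin d) ℂ) :
    Tdagq v θ ω (n + m) (Fin.append w w') L = Tdagq v θ ω n w (Tdagq v θ (θ^[n] ω) m w' L) := by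
  simp only [Tdagq_eq_conj, Vq_append, conjTranspose_mul, Matrix.mul_assoc]

theorem Tdagq_add (ω : Ω) (n : ℕ) (w : Fin n → 𝒜) (L M : Matrix (Fin d) (Fin d) ℂ) :
    Tdagq v θ ω n w (L + M) = Tdagq v θ ω n w L + Tdagq v θ ω n w M := by
  simp only [Tdagq_eq_conj, Matrix.mul_add, Matrix.add_mul]

theorem continuous_Tdagq (ω : Ω) (n : ℕ) (w : Fin n → 𝒜) : Continuous (Tdagq v θ ω n w) := by
  simp only [funext (Tdagq_eq_conj v θ ω n w)]
  fun_prop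

end Kraus

section Cylinders

variable {𝒜 : Type*}

theorem cyl_zero (w : Fin 0 → 𝒜) : cyl 0 w = Set.univ := by
  simp [cyl]

theorem measurableSet_cyl [MeasurableSpace 𝒜] [MeasurableSingletonClass 𝒜] (n : ℕ)
    (w : Fin n → 𝒜) : MeasurableSet (cyl n w) := by
  have hcyl : cyl n w = ⋂ i : Fin n, (fun x : ℕ → 𝒜 => x i) ⁻¹' {w i} := by
    ext x; simp [cyl]
  rw [hcyl]
  exact .iInter fun i => measurable_pi_apply _ (measurableSet_singleton _)

theorem cyl_inter_cyl_of_mem {n m : ℕ} {w : Fin n → 𝒜} {w' : Fin m → 𝒜} {x : ℕ → 𝒜}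
    (hx : x ∈ cyl n w) (hx' : x ∈ cyl m w') :
    cyl n w ∩ cyl m w' = cyl (max n m) (fun i => x i) := by
  ext y
  simp only [cyl, Set.mem_inter_iff, Set.mem_ofPred_eq]
  constructor
  · rintro ⟨hy, hy'⟩ ⟨i, hi⟩
    rcases lt_max_iff.1 hi with hin | him
    · exact (hy ⟨i, hin⟩).trans (hx ⟨i, hin⟩).symm
    · exact (hy' ⟨i, him⟩).trans (hx' ⟨i, him⟩).symm
  · intro hy
    refine ⟨fun i => ?_, fun i => ?_⟩
    · exact (hy ⟨i, lt_max_of_lt_left i.2⟩).trans (hx i)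
    · exact (hy ⟨i, lt_max_of_lt_right i.2⟩).trans (hx' i)

theorem preimage_shift_cyl_inter_cyl (n m : ℕ) (w : Fin n → 𝒜) (w' : Fin m → 𝒜) :
    (fun x (k : ℕ) => x (k + n)) ⁻¹' cyl m w' ∩ cyl n w = cyl (n + m) (Fin.append w w') := by
  ext x
  simp only [cyl, Set.mem_inter_iff, Set.mem_preimage, Set.mem_ofPred_eq]
  rw [Fin.forall_fin_add, and_comm]
  simp [add_comm]

variable (𝒜) in
def wordCylinders : Set (Set (ℕ → 𝒜)) := {s | ∃ n w, cyl n w = s}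

theorem isPiSystem_wordCylinders : IsPiSystem (wordCylinders 𝒜) := by
  rintro _ ⟨n, w, rfl⟩ _ ⟨m, w', rfl⟩ ⟨x, hx, hx'⟩
  exact ⟨_, _, (cyl_inter_cyl_of_mem hx hx').symm⟩

theorem preimage_eval_eq_iUnion_cyl (i : ℕ) (s : Set 𝒜) :
    (fun x : ℕ → 𝒜 => x i) ⁻¹' s =
      ⋃ (w : Fin (i + 1) → 𝒜) (_ : w (Fin.last i) ∈ s), cyl (i + 1) w := by
  ext x
  simp only [Set.mem_preimage, Set.mem_iUnion, cyl, Set.mem_ofPred_eq]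
  constructor
  · exact fun hx => ⟨fun j => x j, hx, fun j => rfl⟩
  · rintro ⟨w, hw, hx⟩
    have hxi := hx (Fin.last i)
    rw [Fin.val_last] at hxi
    rwa [hxi]

theorem generateFrom_wordCylinders [MeasurableSpace 𝒜] [Countable 𝒜]
    [MeasurableSingletonClass 𝒜] :
    (MeasurableSpace.pi : MeasurableSpace (ℕ → 𝒜)) =
      MeasurableSpace.generateFrom (wordCylinders 𝒜) := by
  refine le_antisymm (iSup_le fun i => ?_) (MeasurableSpace.generateFrom_le ?_)
  · rintro _ ⟨s, -, rfl⟩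
    rw [preimage_eval_eq_iUnion_cyl]
    exact .iUnion fun w => .iUnion fun _ => MeasurableSpace.measurableSet_generateFrom ⟨_, w, rfl⟩
  · rintro _ ⟨n, w, rfl⟩
    exact measurableSet_cyl n w

end Cylinders

section CountablyAdditive

open Function

variable {α M : Type*} [MeasurableSpace α] [AddCommGroup M] [TopologicalSpace M]

def IsCountablyAdditive (Q : Set α → M) : Prop :=
  ∀ ⦃f : ℕ → Set α⦄, (∀ k, MeasurableSet (f k)) → Pairwise (Disjoint on f) →
    HasSum (fun k => Q (f k)) (Q (⋃ k, f k))

theorem IsCountablyAdditive.map_empty [IsTopologicalAddGroup M] [T2Space M] {Q : Set α → M}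
    (hQ : IsCountablyAdditive Q) : Q ∅ = 0 := by
  have h : HasSum (fun _ : ℕ => Q ∅) (Q ∅) := by
    simpa using hQ (f := fun _ => ∅) (fun _ => .empty) fun _ _ _ => disjoint_bot_left
  exact tendsto_nhds_unique tendsto_const_nhds h.summable.tendsto_atTop_zero

-- A `VectorMeasure` must vanish on non-measurable sets, so `Q` is cut off there.
open scoped Classical in
noncomputable def IsCountablyAdditive.toVectorMeasure [IsTopologicalAddGroup M] [T2Space M]
    {Q : Set α → M} (hQ : IsCountablyAdditive Q) : VectorMeasure α M where
  measureOf' s := if MeasurableSet s then Q s else 0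
  empty' := by simp [hQ.map_empty]
  not_measurable' _ hs := if_neg hs
  m_iUnion' f hf hd := by
    simpa only [if_pos (hf _), if_pos (MeasurableSet.iUnion hf)] using hQ hf hd

open scoped Classical in
theorem IsCountablyAdditive.toVectorMeasure_apply [IsTopologicalAddGroup M] [T2Space M]
    {Q : Set α → M} (hQ : IsCountablyAdditive Q) {s : Set α} (hs : MeasurableSet s) :
    hQ.toVectorMeasure s = Q s :=
  if_pos hs

theorem isCountablyAdditive_of_entries {ι κ R : Type*} [AddCommGroup R] [TopologicalSpace R]
    {Q : Set α → Matrix ι κ R}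
    (hQ : ∀ f : ℕ → Set α, (∀ k, MeasurableSet (f k)) → Pairwise (Disjoint on f) →
      ∀ i j, HasSum (fun k => Q (f k) i j) (Q (⋃ k, f k) i j)) :
    IsCountablyAdditive Q :=
  fun f hf hd => Pi.hasSum.2 fun i => Pi.hasSum.2 fun j => hQ f hf hd i j

end CountablyAdditive

theorem IsCountablyAdditive.preimage_shift_inter_cyl {Ω 𝒜 : Type*} {d : ℕ} [Countable 𝒜]
    [MeasurableSpace 𝒜] [MeasurableSingletonClass 𝒜]
    (v : Ω → 𝒜 → Matrix (Fin d) (Fin d) ℂ) (θ : Ω → Ω) (ω : Ω) (n : ℕ) (w : Fin n → 𝒜)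
    {Q Q' : Set (ℕ → 𝒜) → Matrix (Fin d) (Fin d) ℂ}
    (hQ : IsCountablyAdditive Q) (hQ' : IsCountablyAdditive Q')
    (hQcyl : ∀ m (w' : Fin m → 𝒜), Q (cyl m w') = Tdagq v θ ω m w' 1)
    (hQ'cyl : ∀ m (w' : Fin m → 𝒜), Q' (cyl m w') = Tdagq v θ (θ^[n] ω) m w' 1)
    {S : Set (ℕ → 𝒜)} (hS : MeasurableSet S) :
    Q ((fun x (k : ℕ) => x (k + n)) ⁻¹' S ∩ cyl n w) = Tdagq v θ ω n w (Q' S) := by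
  have hshift : Measurable fun (x : ℕ → 𝒜) (k : ℕ) => x (k + n) :=
    measurable_pi_lambda _ fun k => measurable_pi_apply _
  let T : Matrix (Fin d) (Fin d) ℂ →+ Matrix (Fin d) (Fin d) ℂ :=
    AddMonoidHom.mk' (Tdagq v θ ω n w) (Tdagq_add v θ ω n w)
  let lhs := (hQ.toVectorMeasure.restrict (cyl n w)).map fun x (k : ℕ) => x (k + n)
  let rhs := hQ'.toVectorMeasure.mapRange T (continuous_Tdagq v θ ω n w)
  have lhs_apply {A} (hA : MeasurableSet A) :
      lhs A = Q ((fun x (k : ℕ) => x (k + n)) ⁻¹' A ∩ cyl n w) := by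
    rw [VectorMeasure.map_apply _ hshift hA,
      VectorMeasure.restrict_apply _ (measurableSet_cyl n w) (hshift hA),
      hQ.toVectorMeasure_apply ((hshift hA).inter (measurableSet_cyl n w))]
  have rhs_apply {A} (hA : MeasurableSet A) : rhs A = Tdagq v θ ω n w (Q' A) :=
    congrArg T (hQ'.toVectorMeasure_apply hA)
  have agree_cyl : ∀ A ∈ wordCylinders 𝒜, lhs A = rhs A := by
    rintro _ ⟨m, w', rfl⟩
    rw [lhs_apply (measurableSet_cyl m w'), rhs_apply (measurableSet_cyl m w'),
      preimage_shift_cyl_inter_cyl, hQcyl, hQ'cyl, Tdagq_append]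
  have lhs_eq_rhs : lhs = rhs := by
    refine VectorMeasure.ext_of_generateFrom _ agree_cyl generateFrom_wordCylinders
      isPiSystem_wordCylinders ?_
    rw [← cyl_zero Fin.elim0]
    exact agree_cyl _ ⟨0, _, rfl⟩
  rw [← lhs_apply hS, lhs_eq_rhs, rhs_apply hS]

theorem stmt18_general {Ω 𝒜 : Type*} {d : ℕ} [Fintype 𝒜] [MeasurableSpace 𝒜]
    [MeasurableSingletonClass 𝒜]
    [MeasurableSpace Ω] (μ : Measure Ω)
    (θ : Ω → Ω) (hθ : Ergodic θ μ)
    (v : Ω → 𝒜 → Matrix (Fin d) (Fin d) ℂ)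
    -- the matrix-valued quenched quantum measure Q*
    (Qstar : Ω → Set (ℕ → 𝒜) → Matrix (Fin d) (Fin d) ℂ)
    (hQscyl : ∀ n (w : Fin n → 𝒜), ∀ᵐ ω ∂μ, Qstar ω (cyl n w) = Tdagq v θ ω n w 1)
    (hQsadd : ∀ ω (f : ℕ → Set (ℕ → 𝒜)), (∀ k, MeasurableSet (f k)) →
      Pairwise (Function.onFun Disjoint f) →
      ∀ i j, HasSum (fun k => Qstar ω (f k) i j) (Qstar ω (⋃ k, f k) i j)) :
    ∀ S : Set (ℕ → 𝒜), MeasurableSet S → ∀ n (w : Fin n → 𝒜),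
      ∀ᵐ ω ∂μ,
        Qstar ω (((fun x (k : ℕ) => x (k + n)) ⁻¹' S) ∩ cyl n w)
          = Tdagq v θ ω n w (Qstar (θ^[n] ω) S) := by
  intro S hS n w
  have hcyl : ∀ᵐ ω ∂μ, ∀ m (w' : Fin m → 𝒜), Qstar ω (cyl m w') = Tdagq v θ ω m w' 1 :=
    ae_all_iff.2 fun m => ae_all_iff.2 (hQscyl m)
  have hcyl_iterate := (hθ.toMeasurePreserving.iterate n).quasiMeasurePreserving.ae hcyl
  filter_upwards [hcyl, hcyl_iterate] with ω hω hω_iterate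
  have hadd (ω' : Ω) : IsCountablyAdditive (Qstar ω') := isCountablyAdditive_of_entries (hQsadd ω')
  exact (hadd ω).preimage_shift_inter_cyl v θ ω n w (hadd _) hω hω_iterate hS

/-- For any word (a_1,…,a_n) and measurable S,
Q*_ω(σ^{-n}(S) ∩ π_n⁻¹{(a_1,…,a_n)}) = T†_{a_1;θ(ω)} ∘ ⋯ ∘ T†_{a_n;θⁿ(ω)}(Q*_{θⁿ(ω)}(S))
for ℙ-a.e. ω. -/
theorem stmt18 {Ω 𝒜 : Type*} {d : ℕ} [Fintype 𝒜] [MeasurableSpace 𝒜]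
    [MeasurableSingletonClass 𝒜]
    [MeasurableSpace Ω] (μ : Measure Ω) [IsProbabilityMeasure μ]
    (θ θinv : Ω → Ω) (hθ : Ergodic θ μ)
    (hinvm : Measurable θinv) (hli : Function.LeftInverse θinv θ)
    (hri : Function.RightInverse θinv θ)
    (v : Ω → 𝒜 → Matrix (Fin d) (Fin d) ℂ)
    (hvmeas : ∀ a i j, Measurable fun ω => v ω a i j)
    (hv : ∀ᵐ ω ∂μ, ∑ a, (v ω a)ᴴ * v ω a = 1)
    -- the matrix-valued quenched quantum measure Q*
    (Qstar : Ω → Set (ℕ → 𝒜) → Matrix (Fin d) (Fin d) ℂ)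
    (hQscyl : ∀ n (w : Fin n → 𝒜), ∀ᵐ ω ∂μ, Qstar ω (cyl n w) = Tdagq v θ ω n w 1)
    (hQsadd : ∀ ω (f : ℕ → Set (ℕ → 𝒜)), (∀ k, MeasurableSet (f k)) →
      Pairwise (Function.onFun Disjoint f) →
      ∀ i j, HasSum (fun k => Qstar ω (f k) i j) (Qstar ω (⋃ k, f k) i j)) :
    ∀ S : Set (ℕ → 𝒜), MeasurableSet S → ∀ n (w : Fin n → 𝒜),
      ∀ᵐ ω ∂μ,
        Qstar ω (((fun x (k : ℕ) => x (k + n)) ⁻¹' S) ∩ cyl n w)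
          = Tdagq v θ ω n w (Qstar (θ^[n] ω) S) :=
  stmt18_general μ θ hθ v Qstar hQscyl hQsadd
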